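/- arXiv:2402.08663 — 6 statements merged into one kernel-verified Lean document; each statement's English description precedes it below -/
import Mathlib

section
/- Let p ≥ 1 be a positive integer and a_1, ..., a_p nonnegative integers with a_1 + ··· + a_p ≥ 2. Set α_p = (2π)^{-(p-1)/(4p)} p^{1/(4p)}. Then ∏_{i=1}^p (p·a_i)! ≤ α_p^{2p} · p^{p(a_1+···+a_p)} · [(a_1+···+a_p)!]^p. -/
open Real

section StirlingAux

open Filter

private lemma stirling_antitone' : Antitone (fun n => Stirling.stirlingSeq (n+1)) := fun m n h => by
  have h2 := Stirling.log_stirlingSeq'_antitone h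
  exact (Real.log_le_log_iff (Stirling.stirlingSeq'_pos n) (Stirling.stirlingSeq'_pos m)).mp h2

private lemma stirling_lb' (n : ℕ) : √π ≤ Stirling.stirlingSeq (n+1) :=
  stirling_antitone'.le_of_tendsto
    (Stirling.tendsto_stirlingSeq_sqrt_pi.comp (tendsto_add_atTop_nat 1)) n

private lemma stirling_ub' (n : ℕ) : Stirling.stirlingSeq (n+1) ≤ exp 1 / √2 := by
  have := stirling_antitone' (Nat.zero_le n)
  simpa [Stirling.stirlingSeq_one] using this

private lemma fac_lower' (n : ℕ) : √π * (√(2*n) * ((n:ℝ)/exp 1)^n) ≤ (n.factorial : ℝ) := by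
  cases n with
  | zero => norm_num
  | succ m =>
    have hD : 0 < √(2*(m+1:ℕ)) * (((m+1:ℕ):ℝ)/exp 1)^(m+1) := by positivity
    have := stirling_lb' m
    rw [Stirling.stirlingSeq, le_div_iff₀ hD] at this
    linarith

private lemma fac_upper' (n : ℕ) (hn : 1 ≤ n) :
    (n.factorial : ℝ) ≤ (exp 1 / √2) * (√(2*n) * ((n:ℝ)/exp 1)^n) := by
  obtain ⟨m, rfl⟩ : ∃ m, n = m + 1 := ⟨n - 1, by omega⟩
  have hD : 0 < √(2*(m+1:ℕ)) * (((m+1:ℕ):ℝ)/exp 1)^(m+1) := by positivity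
  have := stirling_ub' m
  rw [Stirling.stirlingSeq, div_le_iff₀ hD] at this
  linarith

private lemma const_eq' (p : ℕ) (hp : 1 ≤ p) :
    ((2*π) ^ (-((p:ℝ)-1)/(4*(p:ℝ))) * (p:ℝ) ^ (1/(4*(p:ℝ))))^(2*p)
      = √(p:ℝ) / (√(2*π)) ^ (p-1) := by
  have hπ : (0:ℝ) < 2*π := by positivity
  have hp0 : (p:ℝ) ≠ 0 := by positivity
  rw [mul_pow, ← rpow_natCast ((2*π) ^ (-((p:ℝ)-1)/(4*(p:ℝ)))) (2*p),
      ← rpow_natCast ((p:ℝ) ^ (1/(4*(p:ℝ)))) (2*p),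
      ← rpow_mul hπ.le, ← rpow_mul (Nat.cast_nonneg p)]
  push_cast
  rw [show -((p:ℝ)-1)/(4*(p:ℝ)) * (2*p) = -(((p:ℝ)-1) * (1/2)) by field_simp; ring,
      show 1/(4*(p:ℝ)) * (2*(p:ℝ)) = 1/2 by field_simp; ring]
  rw [rpow_neg hπ.le, ← Real.rpow_natCast (√(2*π)) (p-1), Real.sqrt_eq_rpow (2*π),
      ← rpow_mul hπ.le, Nat.cast_sub hp, ← Real.sqrt_eq_rpow (p:ℝ), div_eq_mul_inv]
  ring_nf

private lemma scalar_ineq' (p s : ℕ) (hp : 2 ≤ p) (hs : 2 ≤ s) :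
    exp 1 * √(s:ℝ) ≤ √(2*π) * (√(s:ℝ))^p := by
  have hs2 : (2:ℝ) ≤ (s:ℝ) := by exact_mod_cast hs
  have h1 : √2 ≤ √(s:ℝ) := sqrt_le_sqrt hs2
  have h1' : (1:ℝ) ≤ √(s:ℝ) := le_trans (by nlinarith [sq_sqrt (by norm_num : (0:ℝ) ≤ 2), sqrt_nonneg (2:ℝ)]) h1
  have h2 : (√(s:ℝ))^2 ≤ (√(s:ℝ))^p := pow_le_pow_right₀ h1' hp
  have h3 : exp 1 ≤ √(2*π) * √2 := by
    have hpi := Real.pi_gt_three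
    have he := Real.exp_one_lt_d9
    nlinarith [sq_sqrt (le_of_lt (by positivity : (0:ℝ) < 2*π)), sq_sqrt (by norm_num : (0:ℝ) ≤ 2),
      sqrt_nonneg (2*π), sqrt_nonneg (2:ℝ), mul_nonneg (sqrt_nonneg (2*π)) (sqrt_nonneg (2:ℝ))]
  have h4 : √2 * √(s:ℝ) ≤ (√(s:ℝ))^2 := by
    rw [sq]
    exact mul_le_mul_of_nonneg_right h1 (sqrt_nonneg _)
  have h5 : √(2*π) * (√2 * √(s:ℝ)) ≤ √(2*π) * (√(s:ℝ))^p :=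
    mul_le_mul_of_nonneg_left (h4.trans h2) (sqrt_nonneg _)
  calc exp 1 * √(s:ℝ) ≤ (√(2*π) * √2) * √(s:ℝ) :=
        mul_le_mul_of_nonneg_right h3 (sqrt_nonneg _)
    _ = √(2*π) * (√2 * √(s:ℝ)) := by ring
    _ ≤ _ := h5

private lemma mid' (p s : ℕ) (hp : 2 ≤ p) (hs : 2 ≤ s) :
    (exp 1/√2) * (√(2*((p*s:ℕ):ℝ)) * (((p*s:ℕ):ℝ)/exp 1)^(p*s))
      ≤ (√(p:ℝ) * √(2*π) / (√(2*π))^p) * (p:ℝ)^(p*s) * (√π * (√(2*(s:ℝ)) * ((s:ℝ)/exp 1)^s))^p := by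
  have hscal := scalar_ineq' p s hp hs
  have hsp : (0:ℝ) < (s:ℝ) := by exact_mod_cast lt_of_lt_of_le two_pos hs
  have hpp : (0:ℝ) < (p:ℝ) := by exact_mod_cast lt_of_lt_of_le two_pos hp
  have h2 : (0:ℝ) < √2 := by positivity
  have h2π : (0:ℝ) < √(2*π) := by positivity
  set E := exp 1 with hE
  have hEpos : 0 < E := exp_pos 1
  set Q : ℝ := (((s:ℝ))/E)^s with hQ
  have hQ0 : 0 ≤ Q := by positivity
  push_cast
  have l1 : √(2*((p:ℝ)*(s:ℝ))) = √2 * (√(p:ℝ) * √(s:ℝ)) := by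
    rw [sqrt_mul (by norm_num), sqrt_mul hpp.le]
  have l2 : (((p:ℝ)*(s:ℝ))/E)^(p*s) = (p:ℝ)^(p*s) * Q^p := by
    rw [hQ, ← pow_mul, mul_comm s p, mul_div_assoc, mul_pow]
  have l3 : (√π * (√(2*(s:ℝ)) * ((s:ℝ)/E)^s))^p = (√π)^p * ((√2)^p * (√(s:ℝ))^p * Q^p) := by
    rw [sqrt_mul (by norm_num), hQ]; ring
  have key : (√π)^p * (√2)^p = (√(2*π))^p := by
    rw [← mul_pow, mul_comm (√π) (√2), ← sqrt_mul (by norm_num) π]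
  have eL : (E/√2) * (√2 * (√(p:ℝ) * √(s:ℝ)) * ((p:ℝ)^(p*s) * Q^p))
      = (E * √(s:ℝ)) * (√(p:ℝ) * (p:ℝ)^(p*s) * Q^p) := by
    field_simp
  have eR : (√(p:ℝ) * √(2*π) / (√(2*π))^p) * (p:ℝ)^(p*s) * ((√π)^p * ((√2)^p * (√(s:ℝ))^p * Q^p))
      = (√(2*π) * (√(s:ℝ))^p) * (√(p:ℝ) * (p:ℝ)^(p*s) * Q^p) := by
    have hne : ((√π)^p * (√2)^p : ℝ) ≠ 0 := by positivity
    rw [← key]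
    field_simp
  rw [l1, l2, l3, eL, eR]
  exact mul_le_mul_of_nonneg_right hscal (by positivity)

end StirlingAux

theorem stmt_2 (p : ℕ) (hp : 1 ≤ p) (a : Fin p → ℕ) (hsum : 2 ≤ ∑ i, a i) :
    ((∏ i, Nat.factorial (p * a i) : ℕ) : ℝ) ≤
      ((2 * π) ^ (-((p : ℝ) - 1) / (4 * p)) * (p : ℝ) ^ (1 / (4 * (p : ℝ)))) ^ (2 * p) *
        (p : ℝ) ^ (p * ∑ i, a i) * ((Nat.factorial (∑ i, a i) : ℝ)) ^ p := by
  set s := ∑ i, a i with hs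
  have hdvd : (∏ i, Nat.factorial (p * a i)) ∣ Nat.factorial (p * s) := by
    have := Nat.prod_factorial_dvd_factorial_sum Finset.univ (fun i => p * a i)
    rwa [← Finset.mul_sum, ← hs] at this
  have step1 : ((∏ i, Nat.factorial (p * a i) : ℕ) : ℝ) ≤ (Nat.factorial (p * s) : ℝ) :=
    Nat.cast_le.mpr (Nat.le_of_dvd (Nat.factorial_pos _) hdvd)
  rcases eq_or_lt_of_le hp with hp1 | hp2
  · -- p = 1
    subst hp1
    simp only [hs, Fin.sum_univ_one, Fin.prod_univ_one, one_mul, Nat.cast_one, pow_one]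
    norm_num
  · -- 2 ≤ p
    have hp2' : 2 ≤ p := hp2
    have hps1 : 1 ≤ p * s := Nat.one_le_iff_ne_zero.mpr (by positivity)
    have h2π : (0:ℝ) < √(2*π) := by positivity
    have hconst : ((2 * π) ^ (-((p : ℝ) - 1) / (4 * p)) * (p : ℝ) ^ (1 / (4 * (p : ℝ)))) ^ (2 * p)
        = √(p:ℝ) * √(2*π) / (√(2*π))^p := by
      rw [const_eq' p hp]
      have hpow : (√(2*π))^p = (√(2*π))^(p-1) * √(2*π) := by
        rw [← pow_succ, Nat.sub_add_cancel hp]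
      rw [hpow]
      have hne1 : ((√(2*π))^(p-1) : ℝ) ≠ 0 := by positivity
      field_simp
    rw [hconst]
    have step2 := fac_upper' (p*s) hps1
    have step3 := mid' p s hp2' hsum
    have step4 : (√π * (√(2*(s:ℝ)) * ((s:ℝ)/exp 1)^s))^p ≤ ((Nat.factorial s : ℝ))^p :=
      pow_le_pow_left₀ (by positivity) (fac_lower' s) p
    have step5 : (√(p:ℝ) * √(2*π) / (√(2*π))^p) * (p:ℝ)^(p*s) * (√π * (√(2*(s:ℝ)) * ((s:ℝ)/exp 1)^s))^p
        ≤ (√(p:ℝ) * √(2*π) / (√(2*π))^p) * (p:ℝ)^(p*s) * ((Nat.factorial s : ℝ))^p :=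
      mul_le_mul_of_nonneg_left step4 (by positivity)
    exact le_trans step1 (le_trans step2 (le_trans step3 step5))
end

section
/- For every positive integer s ≥ 2, (p·s)! ≤ (2π)^{-(p-1)/2} · p^{p·s + 1/2} · (s!)^p, where p is a positive integer. -/
open Real

private lemma sqrtPi_le_stirlingSeq (n : ℕ) (hn : 1 ≤ n) : √π ≤ Stirling.stirlingSeq n := by
  refine le_of_tendsto Stirling.tendsto_stirlingSeq_sqrt_pi ?_
  filter_upwards [Filter.eventually_ge_atTop n] with m hm
  obtain ⟨k, rfl⟩ : ∃ k, n = k + 1 := ⟨n - 1, by omega⟩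
  obtain ⟨j, rfl⟩ : ∃ j, m = j + 1 := ⟨m - 1, by omega⟩
  exact Stirling.stirlingSeq'_antitone (by omega)

private lemma stirlingSeq_le (n : ℕ) (hn : 1 ≤ n) : Stirling.stirlingSeq n ≤ exp 1 / √2 := by
  rw [← Stirling.stirlingSeq_one]
  obtain ⟨k, rfl⟩ : ∃ k, n = k + 1 := ⟨n - 1, by omega⟩
  exact Stirling.stirlingSeq'_antitone (by omega : 0 ≤ k)

private lemma fact_eq (n : ℕ) (hn : 1 ≤ n) :
    ((n.factorial : ℕ) : ℝ) = Stirling.stirlingSeq n * (√(2 * n) * ((n : ℝ) / exp 1) ^ n) := by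
  have h0 : (0 : ℝ) < n := by exact_mod_cast hn
  have hd : (0 : ℝ) < √(2 * n) * ((n : ℝ) / exp 1) ^ n := by positivity
  rw [Stirling.stirlingSeq, div_mul_cancel₀ _ hd.ne']

private lemma fact_upper (n : ℕ) (hn : 1 ≤ n) :
    ((n.factorial : ℕ) : ℝ) ≤ (exp 1 / √2) * (√(2 * n) * ((n : ℝ) / exp 1) ^ n) := by
  have h0 : (0 : ℝ) < n := by exact_mod_cast hn
  have hd : (0 : ℝ) ≤ √(2 * n) * ((n : ℝ) / exp 1) ^ n := by positivity
  rw [fact_eq n hn]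
  exact mul_le_mul_of_nonneg_right (stirlingSeq_le n hn) hd

private lemma fact_lower (n : ℕ) (hn : 1 ≤ n) :
    √π * (√(2 * n) * ((n : ℝ) / exp 1) ^ n) ≤ ((n.factorial : ℕ) : ℝ) := by
  have h0 : (0 : ℝ) < n := by exact_mod_cast hn
  have hd : (0 : ℝ) ≤ √(2 * n) * ((n : ℝ) / exp 1) ^ n := by positivity
  rw [fact_eq n hn]
  exact mul_le_mul_of_nonneg_right (sqrtPi_le_stirlingSeq n hn) hd

private lemma log_stirling_form (n : ℕ) (hn : 1 ≤ n) (c : ℝ) (hc : 0 < c) :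
    Real.log (c * (√(2 * n) * ((n : ℝ) / exp 1) ^ n)) =
      Real.log c + (Real.log 2 + Real.log n) / 2 + n * (Real.log n - 1) := by
  have h0 : (0 : ℝ) < n := by exact_mod_cast hn
  rw [Real.log_mul hc.ne' (by positivity), Real.log_mul (by positivity) (by positivity),
    Real.log_sqrt (by positivity), Real.log_pow, Real.log_div h0.ne' (exp_pos 1).ne',
    Real.log_exp, Real.log_mul (by norm_num) h0.ne']
  ring

theorem stmt_3 (p s : ℕ) (hp : 1 ≤ p) (hs : 2 ≤ s) :
    ((Nat.factorial (p * s) : ℕ) : ℝ) ≤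
      (2 * π) ^ (-((p : ℝ) - 1) / 2) * (p : ℝ) ^ ((p : ℝ) * s + 1 / 2) *
        ((Nat.factorial s : ℝ)) ^ p := by
  rcases eq_or_lt_of_le hp with h1 | h2
  · -- p = 1
    obtain rfl : p = 1 := h1.symm
    simp only [Nat.cast_one, one_mul]
    norm_num [Real.one_rpow, Real.rpow_zero]
  · have hp2 : 2 ≤ p := h2
    have hP : (2 : ℝ) ≤ p := by exact_mod_cast hp2
    have hS : (2 : ℝ) ≤ s := by exact_mod_cast hs
    have hP0 : (0 : ℝ) < p := by linarith
    have hS0 : (0 : ℝ) < s := by linarith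
    have hN1 : 1 ≤ p * s := Nat.one_le_iff_ne_zero.mpr (by positivity)
    have hNcast : ((p * s : ℕ) : ℝ) = (p : ℝ) * s := by push_cast; ring
    have hfpos : (0 : ℝ) < (Nat.factorial s : ℝ) := by
      exact_mod_cast s.factorial_pos
    have hNfpos : (0 : ℝ) < ((Nat.factorial (p * s) : ℕ) : ℝ) := by
      exact_mod_cast (p * s).factorial_pos
    have hRpos : (0 : ℝ) < (2 * π) ^ (-((p : ℝ) - 1) / 2) * (p : ℝ) ^ ((p : ℝ) * s + 1 / 2) *
        ((Nat.factorial s : ℝ)) ^ p := by positivity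
    rw [← Real.log_le_log_iff hNfpos hRpos]
    -- expand log of RHS
    rw [Real.log_mul (by positivity) (by positivity), Real.log_mul (by positivity) (by positivity),
      Real.log_rpow (by positivity), Real.log_rpow hP0, Real.log_pow,
      Real.log_mul (by norm_num) pi_pos.ne']
    -- upper bound on log ((p*s)!)
    have hub : (0:ℝ) < exp 1 / √2 := by positivity
    have A1 : Real.log ((Nat.factorial (p * s) : ℕ) : ℝ) ≤
        Real.log (exp 1 / √2) + (Real.log 2 + Real.log ((p * s : ℕ) : ℝ)) / 2 +
          ((p * s : ℕ) : ℝ) * (Real.log ((p * s : ℕ) : ℝ) - 1) := by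
      rw [← log_stirling_form (p * s) hN1 _ hub]
      exact Real.log_le_log hNfpos (fact_upper (p * s) hN1)
    have A2 : Real.log √π + (Real.log 2 + Real.log s) / 2 + (s : ℝ) * (Real.log s - 1) ≤
        Real.log (Nat.factorial s : ℝ) := by
      rw [← log_stirling_form s (by omega) _ (sqrt_pos.mpr pi_pos)]
      exact Real.log_le_log (by positivity) (fact_lower s (by omega))
    have A2' : (p : ℝ) * (Real.log √π + (Real.log 2 + Real.log s) / 2 +
        (s : ℝ) * (Real.log s - 1)) ≤ (p : ℝ) * Real.log (Nat.factorial s : ℝ) :=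
      mul_le_mul_of_nonneg_left A2 hP0.le
    rw [hNcast, Real.log_mul hP0.ne' hS0.ne'] at A1
    rw [Real.log_sqrt pi_pos.le] at A2'
    rw [Real.log_div (exp_pos 1).ne' (by positivity), Real.log_exp,
      Real.log_sqrt (by norm_num)] at A1
    -- scalar facts
    have hL2 : (0.6931471803 : ℝ) < Real.log 2 := Real.log_two_gt_d9
    have hLpi : (1 : ℝ) ≤ Real.log π := by
      rw [← Real.log_exp 1]
      apply Real.log_le_log (exp_pos 1)
      have := Real.exp_one_lt_d9
      have := Real.pi_gt_three
      linarith
    have hLS : Real.log 2 ≤ Real.log (s : ℝ) := Real.log_le_log (by norm_num) hS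
    have h1 : ((p : ℝ) - 1) / 2 * Real.log 2 ≤ ((p : ℝ) - 1) / 2 * Real.log (s : ℝ) :=
      mul_le_mul_of_nonneg_left hLS (by linarith)
    nlinarith [A1, A2', h1, hL2, hLpi, hP]
end

section
/- Let d ≥ p ≥ 1 be integers and κ = (κ_1, ..., κ_p) a partition (κ_1 ≥ ··· ≥ κ_p ≥ 0) with |κ| = κ_1 + ··· + κ_p ≥ 2. Then the partitional shifted factorial (d/2)_κ = ∏_{i=1}^p ∏_{j=1}^{κ_i} (d/2 - (i-1)/2 + j - 1) satisfies (d/2)_κ ≥ (2p)^{-|κ|} d^{|κ|}. -/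
/-- The partitional shifted factorial `(a)_κ = ∏_i (a - (i-1)/2)_{κ_i}`, where each
rising factorial is written out as a product. -/
noncomputable def partShiftedFact {p : ℕ} (a : ℝ) (κ : Fin p → ℕ) : ℝ :=
  ∏ i, ∏ j ∈ Finset.range (κ i), (a - (i : ℝ) / 2 + j)

theorem stmt_4 (d p : ℕ) (hp : 1 ≤ p) (hdp : p ≤ d) (κ : Fin p → ℕ)
    (hmono : Antitone κ) (hk : 2 ≤ ∑ i, κ i) :
    (d : ℝ) ^ (∑ i, κ i) / (2 * (p : ℝ)) ^ (∑ i, κ i) ≤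
      partShiftedFact ((d : ℝ) / 2) κ := by
  have hpR : (1 : ℝ) ≤ p := by exact_mod_cast hp
  have hdR : (p : ℝ) ≤ d := by exact_mod_cast hdp
  set c : ℝ := (d : ℝ) / (2 * p) with hc_def
  have hc : 0 ≤ c := by positivity
  have key : ∀ i : Fin p, ∀ j ∈ Finset.range (κ i),
      c ≤ (d : ℝ) / 2 - (i : ℝ) / 2 + j := by
    intro i j _
    have hi : (i : ℝ) ≤ (p : ℝ) - 1 := by
      have h := Nat.succ_le_of_lt i.is_lt
      have : ((i : ℕ) : ℝ) + 1 ≤ p := by exact_mod_cast h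
      linarith
    have hj : (0 : ℝ) ≤ j := Nat.cast_nonneg j
    have hi0 : (0 : ℝ) ≤ i := Nat.cast_nonneg i
    rw [hc_def, div_le_iff₀ (by linarith)]
    nlinarith [mul_le_mul_of_nonneg_left hdR (by linarith : (0:ℝ) ≤ (p:ℝ) - 1)]
  have h1 : (d : ℝ) ^ (∑ i, κ i) / (2 * (p : ℝ)) ^ (∑ i, κ i)
      = ∏ i, ∏ _j ∈ Finset.range (κ i), c := by
    simp only [Finset.prod_const, Finset.card_range]
    rw [Finset.prod_pow_eq_pow_sum, ← div_pow]
  rw [h1]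
  unfold partShiftedFact
  apply Finset.prod_le_prod
  · intro i _
    exact Finset.prod_nonneg fun j _ => hc
  · intro i _
    exact Finset.prod_le_prod (fun j _ => hc) (key i)
end

section
/- Let d ≥ p ≥ 1 be integers and κ = (κ_1, ..., κ_p) a partition with |κ| = κ_1 + ··· + κ_p ≥ 2. Then the partitional shifted factorial satisfies (d/2)_κ ≤ 2^{-|κ|} (d + |κ|)^{|κ|}. -/
lemma amgm {ι : Type*} (s : Finset ι) (hs : s.Nonempty) (f : ι → ℝ)
    (hf : ∀ i ∈ s, 0 ≤ f i) :
    ∏ i ∈ s, f i ≤ ((∑ i ∈ s, f i) / s.card) ^ s.card := by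
  have hn : (0:ℝ) < s.card := by exact_mod_cast Finset.card_pos.mpr hs
  have h := Real.geom_mean_le_arith_mean_weighted s (fun _ => (s.card : ℝ)⁻¹) f
    (fun i _ => by positivity) (by simp [Finset.sum_const]; field_simp) hf
  have hL : (∏ i ∈ s, f i ^ ((s.card:ℝ)⁻¹)) ^ (s.card : ℕ) = ∏ i ∈ s, f i := by
    rw [← Finset.prod_pow]
    refine Finset.prod_congr rfl fun i hi => ?_
    rw [← Real.rpow_natCast (f i ^ ((s.card:ℝ)⁻¹)), ← Real.rpow_mul (hf i hi),
      inv_mul_cancel₀ hn.ne', Real.rpow_one]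
  calc ∏ i ∈ s, f i = (∏ i ∈ s, f i ^ ((s.card:ℝ)⁻¹)) ^ (s.card : ℕ) := hL.symm
    _ ≤ (∑ i ∈ s, (s.card:ℝ)⁻¹ * f i) ^ (s.card : ℕ) := by
        apply pow_le_pow_left₀ (Finset.prod_nonneg fun i hi => Real.rpow_nonneg (hf i hi) _) h
    _ = ((∑ i ∈ s, f i) / s.card) ^ s.card := by
        rw [← Finset.mul_sum]; ring_nf

lemma gauss (m : ℕ) : ∑ j ∈ Finset.range m, (j:ℝ) = m*(m-1)/2 := by
  induction m with
  | zero => simp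
  | succ n ih => rw [Finset.sum_range_succ, ih]; push_cast; ring

theorem stmt_5 (d p : ℕ) (hp : 1 ≤ p) (hdp : p ≤ d) (κ : Fin p → ℕ)
    (hmono : Antitone κ) (hk : 2 ≤ ∑ i, κ i) :
    partShiftedFact ((d : ℝ) / 2) κ ≤
      ((d : ℝ) + (∑ i, κ i)) ^ (∑ i, κ i) / 2 ^ (∑ i, κ i) := by
  classical
  set k : ℕ := ∑ i, κ i with hkdef
  have hk0 : 0 < k := by omega
  have hk0' : (0:ℝ) < k := by exact_mod_cast hk0
  set s : Finset ((_ : Fin p) × ℕ) :=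
    (Finset.univ : Finset (Fin p)).sigma (fun i => Finset.range (κ i)) with hsdef
  set f : (_ : Fin p) × ℕ → ℝ := fun x => (d:ℝ)/2 - (x.1:ℝ)/2 + x.2 with hfdef
  have hcard : s.card = k := by
    simp [hsdef, Finset.card_sigma, hkdef]
  have hprod : partShiftedFact ((d:ℝ)/2) κ = ∏ x ∈ s, f x := by
    rw [hsdef, Finset.prod_sigma, partShiftedFact]
  have hne : s.Nonempty := Finset.card_pos.mp (by omega)
  have hfnn : ∀ x ∈ s, 0 ≤ f x := by
    intro x _
    have h1 : (x.1 : ℕ) < p := x.1.isLt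
    have : ((x.1 : ℕ) : ℝ) ≤ (d:ℝ) := by exact_mod_cast le_of_lt (lt_of_lt_of_le h1 hdp)
    have h2 : (0:ℝ) ≤ (x.2:ℝ) := by positivity
    simp only [hfdef]
    linarith
  -- the sum of the factors
  set S : ℝ := ∑ x ∈ s, f x with hSdef
  have hSnn : 0 ≤ S := Finset.sum_nonneg hfnn
  set T1 : ℝ := ∑ i : Fin p, ((i:ℕ):ℝ) * (κ i) with hT1def
  set T2 : ℝ := ∑ i : Fin p, ((κ i:ℕ):ℝ)^2 with hT2def
  have hT1nn : 0 ≤ T1 := Finset.sum_nonneg fun i _ => by positivity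
  have hT2 : T2 ≤ (k:ℝ)^2 := by
    have hnat : ∑ i : Fin p, κ i * κ i ≤ k * k := by
      calc ∑ i : Fin p, κ i * κ i ≤ ∑ i : Fin p, κ i * k :=
            Finset.sum_le_sum fun i _ => Nat.mul_le_mul_left _
              (Finset.single_le_sum (fun _ _ => Nat.zero_le _) (Finset.mem_univ i))
        _ = k * k := by rw [← Finset.sum_mul]
    have hnat2 : ∑ i : Fin p, (κ i)^2 ≤ k^2 := by
      simpa [sq, Finset.sum_mul] using hnat
    rw [hT2def]
    exact_mod_cast hnat2
  have h2S : 2 * S = (k:ℝ) * d - T1 + T2 - k := by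
    have hinner : ∀ i : Fin p, ∑ j ∈ Finset.range (κ i), f ⟨i, j⟩
        = (κ i:ℝ) * ((d:ℝ)/2 - (i:ℝ)/2) + (κ i:ℝ) * ((κ i:ℝ) - 1) / 2 := by
      intro i
      simp only [hfdef]
      rw [Finset.sum_add_distrib, Finset.sum_const, Finset.card_range, gauss, nsmul_eq_mul]
    have hS2 : S = ∑ i : Fin p, ((κ i:ℝ) * ((d:ℝ)/2 - (i:ℝ)/2) + (κ i:ℝ) * ((κ i:ℝ) - 1) / 2) := by
      rw [hSdef, hsdef, Finset.sum_sigma]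
      exact Finset.sum_congr rfl fun i _ => hinner i
    have hcast : ((k:ℕ):ℝ) = ∑ i : Fin p, ((κ i:ℕ):ℝ) := by
      rw [hkdef]; push_cast; rfl
    rw [hS2, Finset.mul_sum, hT1def, hT2def, hcast, Finset.sum_mul, ← Finset.sum_sub_distrib,
      ← Finset.sum_add_distrib, ← Finset.sum_sub_distrib]
    exact Finset.sum_congr rfl fun i _ => by ring
  have hSle : S ≤ (k:ℝ) * (((d:ℝ) + k) / 2) := by nlinarith [hk0', hT1nn, hT2, h2S]
  calc partShiftedFact ((d:ℝ)/2) κ = ∏ x ∈ s, f x := hprod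
    _ ≤ ((∑ x ∈ s, f x) / s.card) ^ s.card := amgm s hne f hfnn
    _ = (S / k) ^ k := by rw [hcard, ← hSdef]
    _ ≤ (((d:ℝ) + k) / 2) ^ k := by
        apply pow_le_pow_left₀ (by positivity)
        rw [div_le_iff₀ hk0']
        linarith [hSle]
    _ = ((d : ℝ) + k) ^ k / 2 ^ k := div_pow _ _ _
end

section
/- For every integer m ≥ 2 and real t > 0, R_m(t) = ∑_{k=m}^∞ t^k/(k!)^{1/2} satisfies R_m(t) ≤ (4e/π)^{1/4} (e/m)^{(m/2) - (1/4)} t^m exp(c_m t^2 / 2), where c_m = (1 + 1/m)^{-m} e. -/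
/-!
By Stirling, `t^k / √k! ≤ √(k^(-3/2)) · √((e t²)^k / (√(2π) k^(k-1)))`, and Cauchy–Schwarz splits
the series into two. The first, `∑_{k ≥ m} k^(-3/2) ≤ √(8/m)`, telescopes against `2/√(k-1)`.
The second is compared termwise with an exponential series: since `(1 + 1/k)^k` increases,
`k^(k-1) ≥ m^(m-1) ((1 + 1/m)^m)^(k-m) (k-m)!` for `k ≥ m`, so
`∑_{k ≥ m} (e t²)^k / k^(k-1) ≤ (e t²)^m / m^(m-1) · exp (c_m t²)`.
-/

open Real Finset Nat

lemma one_add_one_div_pow_le_of_le {m n : ℕ} (hm : 1 ≤ m) (hmn : m ≤ n) :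
    (1 + 1 / m : ℝ) ^ m ≤ (1 + 1 / n) ^ n := by
  have hm' : (0 : ℝ) < m := by exact_mod_cast hm
  have hn' : (0 : ℝ) < n := by exact_mod_cast hm.trans hmn
  have bernoulli : (1 : ℝ) + 1 / m ≤ (1 + 1 / n) ^ ((n : ℝ) / m) := by
    have h := one_add_mul_self_le_rpow_one_add (s := 1 / n) (p := n / m)
      (by linarith [one_div_pos.2 hn']) ((one_le_div hm').2 (by exact_mod_cast hmn))
    rwa [show (n : ℝ) / m * (1 / n) = 1 / m by field_simp] at h
  calc (1 + 1 / m : ℝ) ^ m ≤ ((1 + 1 / n) ^ ((n : ℝ) / m)) ^ m := by gcongr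
    _ = (1 + 1 / n) ^ n := by
      rw [← rpow_natCast _ m, ← rpow_mul (by positivity), div_mul_cancel₀ _ hm'.ne', rpow_natCast]

lemma pow_pred_mul_pow_mul_factorial_le {m : ℕ} (hm : 1 ≤ m) (j : ℕ) :
    (m : ℝ) ^ (m - 1) * ((1 + 1 / m) ^ m) ^ j * j ! ≤ ((m + j : ℕ) : ℝ) ^ (m + j - 1) := by
  induction j with
  | zero => simp
  | succ j ih =>
    set k := m + j
    have hstep : ((k + 1 : ℕ) : ℝ) ^ k = (k : ℝ) ^ (k - 1) * ((1 + 1 / k) ^ k * k) := by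
      obtain ⟨i, hi⟩ : ∃ i, k = i + 1 := ⟨k - 1, by omega⟩
      rw [hi, Nat.add_sub_cancel, Nat.cast_succ (i + 1)]
      have hy : ((i + 1 : ℕ) : ℝ) ≠ 0 := by positivity
      generalize ((i + 1 : ℕ) : ℝ) = y at hy ⊢
      rw [one_add_div hy, div_pow]
      field_simp
      ring
    calc (m : ℝ) ^ (m - 1) * ((1 + 1 / m) ^ m) ^ (j + 1) * (j + 1)!
        = (m : ℝ) ^ (m - 1) * ((1 + 1 / m) ^ m) ^ j * j ! * ((1 + 1 / m) ^ m * (j + 1 : ℕ)) := by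
          rw [factorial_succ]; push_cast; ring
      _ ≤ (k : ℝ) ^ (k - 1) * ((1 + 1 / k) ^ k * k) := by
          gcongr ?_ * (?_ * ?_)
          · exact one_add_one_div_pow_le_of_le hm (by omega)
          · exact_mod_cast (by omega : j + 1 ≤ k)
      _ = ((m + (j + 1) : ℕ) : ℝ) ^ (m + (j + 1) - 1) := by
          rw [← hstep]; congr 2

lemma sum_range_pow_div_pow_pred_le {m : ℕ} (hm : 1 ≤ m) {x : ℝ} (hx : 0 ≤ x) (n : ℕ) :
    ∑ j ∈ range n, x ^ (m + j) / ((m + j : ℕ) : ℝ) ^ (m + j - 1)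
      ≤ x ^ m / (m : ℝ) ^ (m - 1) * exp (x / (1 + 1 / m) ^ m) := by
  set E : ℝ := (1 + 1 / m) ^ m
  calc ∑ j ∈ range n, x ^ (m + j) / ((m + j : ℕ) : ℝ) ^ (m + j - 1)
      ≤ ∑ j ∈ range n, x ^ m / (m : ℝ) ^ (m - 1) * ((x / E) ^ j / j !) := by
        gcongr with j
        calc x ^ (m + j) / ((m + j : ℕ) : ℝ) ^ (m + j - 1)
            ≤ x ^ (m + j) / ((m : ℝ) ^ (m - 1) * E ^ j * j !) := by
              gcongr
              exact pow_pred_mul_pow_mul_factorial_le hm j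
          _ = _ := by field_simp; ring
    _ = x ^ m / (m : ℝ) ^ (m - 1) * ∑ j ∈ range n, (x / E) ^ j / j ! := (mul_sum ..).symm
    _ ≤ _ := by gcongr; exact sum_le_exp_of_nonneg (by positivity) n

lemma one_div_sqrt_cube_le_sub {x : ℝ} (hx : 1 < x) :
    1 / √(x ^ 3) ≤ 2 / √(x - 1) - 2 / √x := by
  set a := √(x - 1)
  set b := √x
  have ha : 0 < a := sqrt_pos.2 (by linarith)
  have hb : 0 < b := sqrt_pos.2 (by linarith)
  have hab : a ≤ b := sqrt_le_sqrt (by linarith)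
  have hx3 : √(x ^ 3) = b ^ 3 := by
    rw [← sq_sqrt (by linarith : 0 ≤ x), ← pow_mul, mul_comm, pow_mul, sqrt_sq (by positivity)]
  -- `b - a = 1 / (a + b)`, so the claim is `a b (a + b) ≤ 2 b³`
  have hdiff : (b - a) * (a + b) = 1 := by
    nlinarith [sq_sqrt (by linarith : 0 ≤ x - 1), sq_sqrt (by linarith : 0 ≤ x)]
  rw [hx3, div_sub_div _ _ ha.ne' hb.ne', div_le_div_iff₀ (by positivity) (by positivity)]
  nlinarith [mul_le_mul_of_nonneg_left hab (mul_pos hb hb).le, mul_pos ha hb]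

lemma sum_range_one_div_sqrt_cube_le {m : ℕ} (hm : 2 ≤ m) (n : ℕ) :
    ∑ j ∈ range n, 1 / √(((m + j : ℕ) : ℝ) ^ 3) ≤ √(8 / m) := by
  have hm' : (2 : ℝ) ≤ m := by exact_mod_cast hm
  set g : ℕ → ℝ := fun j => 2 / √(((m + j : ℕ) : ℝ) - 1)
  calc ∑ j ∈ range n, 1 / √(((m + j : ℕ) : ℝ) ^ 3)
      ≤ ∑ j ∈ range n, (g j - g (j + 1)) := by
        gcongr with j
        have hx : (1 : ℝ) < (m + j : ℕ) := by
          push_cast; linarith [(j.cast_nonneg : (0 : ℝ) ≤ j)]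
        refine (one_div_sqrt_cube_le_sub hx).trans_eq ?_
        simp only [g]
        push_cast
        ring_nf
    _ = g 0 - g n := sum_range_sub' g n
    _ ≤ 2 / √(m - 1) := by simp only [g]; norm_num; positivity
    _ ≤ √(8 / m) := by
        rw [le_sqrt (by positivity) (by positivity), div_pow, sq_sqrt (by linarith),
          div_le_div_iff₀ (by linarith) (by linarith)]
        nlinarith

lemma pow_div_sqrt_factorial_le {t : ℝ} (ht : 0 ≤ t) {k : ℕ} (hk : k ≠ 0) :
    t ^ k / √(k ! : ℝ) ≤
      √(1 / √((k : ℝ) ^ 3)) * √((exp 1 * t ^ 2) ^ k / (k : ℝ) ^ (k - 1) / √(2 * π)) := by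
  have hk' : (0 : ℝ) < k := by positivity
  have hsq : t ^ k / √(k ! : ℝ) = √((t ^ 2) ^ k / k !) := by
    rw [sqrt_div' _ (by positivity), ← pow_mul, mul_comm, pow_mul, sqrt_sq (by positivity)]
  rw [hsq, ← sqrt_mul (by positivity)]
  refine sqrt_le_sqrt ?_
  calc (t ^ 2) ^ k / k ! ≤ (t ^ 2) ^ k / (√(2 * π * k) * (k / exp 1) ^ k) := by
        gcongr
        exact Stirling.le_factorial_stirling k
    _ = _ := by
        obtain ⟨i, rfl⟩ : ∃ i, k = i + 1 := ⟨k - 1, by omega⟩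
        rw [Nat.add_sub_cancel, sqrt_mul' _ hk'.le, pow_succ _ 2, sqrt_mul' _ hk'.le,
          sqrt_sq hk'.le, div_pow]
        field_simp
        ring

lemma sqrt_sqrt_mul_sqrt_eq {m : ℕ} (hm : 1 ≤ m) {t : ℝ} (ht : 0 ≤ t) :
    √(√(8 / m)) * √((exp 1 * t ^ 2) ^ m / (m : ℝ) ^ (m - 1) / √(2 * π)) =
      (4 * exp 1 / π) ^ ((1 : ℝ) / 4) * (exp 1 / m) ^ ((m : ℝ) / 2 - 1 / 4) * t ^ m := by
  obtain ⟨i, rfl⟩ : ∃ i, m = i + 1 := ⟨m - 1, by omega⟩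
  refine (pow_left_inj₀ (by positivity) (by positivity) four_ne_zero).1 ?_
  have h4 : (4 : ℕ) = 2 * 2 := rfl
  have hroot : ((4 * exp 1 / π) ^ ((1 : ℝ) / 4)) ^ 4 = 4 * exp 1 / π := by
    rw [← rpow_natCast, ← rpow_mul (by positivity)]; norm_num
  have hpow : ((exp 1 / (i + 1 : ℕ)) ^ (((i + 1 : ℕ) : ℝ) / 2 - 1 / 4)) ^ 4 =
      (exp 1 / (i + 1 : ℕ)) ^ (2 * i + 1) := by
    rw [← rpow_natCast, ← rpow_mul (by positivity), ← rpow_natCast]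
    push_cast; ring_nf
  simp only [mul_pow]
  rw [hroot, hpow, h4, pow_mul, pow_mul, sq_sqrt (by positivity),
    sq_sqrt (by positivity), sq_sqrt (by positivity), div_pow, div_pow, sq_sqrt (by positivity),
    Nat.add_sub_cancel]
  push_cast
  rw [div_pow]
  have hm0 : (i : ℝ) + 1 ≠ 0 := by positivity
  field_simp
  ring

theorem stmt_15 (t : ℝ) (ht : 0 < t) (m : ℕ) (hm : 2 ≤ m) :
    (∑' k : ℕ, t ^ (m + k) / Real.sqrt (Nat.factorial (m + k))) ≤
      (4 * Real.exp 1 / Real.pi) ^ ((1 : ℝ) / 4) *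
        (Real.exp 1 / (m : ℝ)) ^ ((m : ℝ) / 2 - 1 / 4) * t ^ m *
          Real.exp ((1 + 1 / (m : ℝ)) ^ (-(m : ℝ)) * Real.exp 1 * t ^ 2 / 2) := by
  set x := exp 1 * t ^ 2
  have hx : 0 ≤ x := by positivity
  have hc : (1 + 1 / (m : ℝ)) ^ (-(m : ℝ)) * exp 1 * t ^ 2 = x / (1 + 1 / m) ^ m := by
    rw [rpow_neg (by positivity), rpow_natCast, mul_assoc, inv_mul_eq_div]
  rw [hc, ← sqrt_sqrt_mul_sqrt_eq (by omega) ht.le, mul_assoc, exp_half,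
    ← sqrt_mul (by positivity), div_mul_eq_mul_div]
  refine tsum_le_of_sum_range_le (fun k => by positivity) fun n => ?_
  calc ∑ j ∈ range n, t ^ (m + j) / √((m + j)! : ℝ)
      ≤ ∑ j ∈ range n, √(1 / √(((m + j : ℕ) : ℝ) ^ 3)) *
          √(x ^ (m + j) / ((m + j : ℕ) : ℝ) ^ (m + j - 1) / √(2 * π)) :=
        sum_le_sum fun j _ => pow_div_sqrt_factorial_le ht.le (by omega)
    _ ≤ √(∑ j ∈ range n, 1 / √(((m + j : ℕ) : ℝ) ^ 3)) *
          √(∑ j ∈ range n, x ^ (m + j) / ((m + j : ℕ) : ℝ) ^ (m + j - 1) / √(2 * π)) :=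
        sum_sqrt_mul_sqrt_le _ (fun _ => by positivity) (fun _ => by positivity)
    _ ≤ _ := by
        rw [← sum_div]
        gcongr
        · exact sum_range_one_div_sqrt_cube_le hm n
        · exact sum_range_pow_div_pow_pred_le (by omega) hx n
end

section
/- Fix real τ > 0, and integers m ≥ 1, d ≥ 1, N ≥ 1. Define a_j = (1+j)^{-N} (d+j)^{-j} τ^j / j! for j ≥ m. Then ∑_{k=m}^∞ a_k ≥ a_m · ∑_{k=0}^∞ μ^k / ((m+1)_k (d+1+m)_k), where μ = ((1+m)/(2+m))^N e^{-1} τ and (x)_k denotes the rising factorial. -/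
/-- The rising factorial `(x)_k = x (x+1) ⋯ (x+k-1)`. -/
noncomputable def risingFact (x : ℝ) (k : ℕ) : ℝ := ∏ j ∈ Finset.range k, (x + j)

lemma risingFact_pos {x : ℝ} (hx : 0 < x) (k : ℕ) : 0 < risingFact x k :=
  Finset.prod_pos fun j _ => by positivity

lemma risingFact_succ (x : ℝ) (k : ℕ) :
    risingFact x (k+1) = risingFact x k * (x + k) := Finset.prod_range_succ _ _

lemma aux_exp (d s : ℕ) (hd : 1 ≤ d) :
    (Real.exp 1)⁻¹ ≤ (((d:ℝ)+s)/((d:ℝ)+1+s))^s := by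
  have hx : (0:ℝ) < (d:ℝ) + s := by positivity
  have h1 : ((d:ℝ)+1+s)/((d:ℝ)+s) = 1 + 1/((d:ℝ)+s) := by field_simp; ring
  have h2 : (1 + 1/((d:ℝ)+s))^s ≤ Real.exp 1 := by
    have := Real.add_one_le_exp (1/((d:ℝ)+s))
    calc (1 + 1/((d:ℝ)+s))^s ≤ (Real.exp (1/((d:ℝ)+s)))^s := by
          apply pow_le_pow_left₀ (by positivity) (by linarith)
      _ = Real.exp (s * (1/((d:ℝ)+s))) := by rw [← Real.exp_nat_mul]
      _ ≤ Real.exp 1 := by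
          apply Real.exp_le_exp.2
          rw [mul_one_div, div_le_one hx]
          have : (1:ℝ) ≤ d := by exact_mod_cast hd
          linarith
  have hpos : (0:ℝ) < (1 + 1/((d:ℝ)+s))^s := by positivity
  have heq : (((d:ℝ)+s)/((d:ℝ)+1+s))^s = ((1 + 1/((d:ℝ)+s))^s)⁻¹ := by
    rw [← h1, ← inv_pow, inv_div]
  rw [heq]
  exact inv_anti₀ hpos h2

lemma aux_mono (m s N : ℕ) (h : m ≤ s) :
    ((1+(m:ℝ))/(2+m))^N ≤ ((1+(s:ℝ))/(2+s))^N := by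
  apply pow_le_pow_left₀ (by positivity)
  rw [div_le_div_iff₀ (by positivity) (by positivity)]
  have : (m:ℝ) ≤ s := by exact_mod_cast h
  nlinarith

lemma aux_ratio (τ : ℝ) (d N s : ℕ) (hd : 1 ≤ d) (a : ℕ → ℝ)
    (ha : ∀ j : ℕ, a j =
      τ ^ j / ((1 + (j : ℝ)) ^ N * ((d : ℝ) + j) ^ j * Nat.factorial j)) :
    a (s+1) = a s * ((((1+(s:ℝ))/(2+s))^N * (((d:ℝ)+s)/((d:ℝ)+1+s))^s * τ)
      / (((s:ℝ)+1) * ((d:ℝ)+1+s))) := by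
  rw [ha (s+1), ha s, Nat.factorial_succ]
  have hd' : (1:ℝ) ≤ d := by exact_mod_cast hd
  have h1 : (0:ℝ) < (s:ℝ)+1 := Nat.cast_add_one_pos s
  have h2 : (0:ℝ) < (d:ℝ)+1+s := by positivity
  have h3 : (0:ℝ) < (d:ℝ)+s := by positivity
  have h4 : (0:ℝ) < (Nat.factorial s : ℝ) := by exact_mod_cast Nat.factorial_pos s
  have h5 : (0:ℝ) < (1+(s:ℝ)) := by positivity
  have h6 : (0:ℝ) < (2+(s:ℝ)) := by positivity
  push_cast
  rw [div_pow, div_pow]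
  field_simp
  ring

theorem stmt_18 (τ : ℝ) (hτ : 0 < τ) (m d N : ℕ) (hm : 1 ≤ m) (hd : 1 ≤ d) (hN : 1 ≤ N)
    (a : ℕ → ℝ)
    (ha : ∀ j : ℕ, a j =
      τ ^ j / ((1 + (j : ℝ)) ^ N * ((d : ℝ) + j) ^ j * Nat.factorial j)) :
    (∑' k : ℕ, a (m + k)) ≥
      a m * ∑' k : ℕ,
        (((1 + (m : ℝ)) / (2 + (m : ℝ))) ^ N * (Real.exp 1)⁻¹ * τ) ^ k /
          (risingFact ((m : ℝ) + 1) k * risingFact ((d : ℝ) + 1 + m) k) := by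
  set μ : ℝ := ((1 + (m : ℝ)) / (2 + (m : ℝ))) ^ N * (Real.exp 1)⁻¹ * τ with hμ
  have hμpos : 0 < μ := by
    have := Real.exp_pos 1
    positivity
  set b : ℕ → ℝ := fun k => μ ^ k /
      (risingFact ((m : ℝ) + 1) k * risingFact ((d : ℝ) + 1 + m) k) with hb
  have hR1 : ∀ k, 0 < risingFact ((m : ℝ) + 1) k :=
    risingFact_pos (by positivity)
  have hR2 : ∀ k, 0 < risingFact ((d : ℝ) + 1 + m) k :=
    risingFact_pos (by positivity)
  have hbpos : ∀ k, 0 < b k := fun k => by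
    have := hR1 k; have := hR2 k
    simp only [hb]; positivity
  have hapos : ∀ j, 0 < a j := fun j => by
    rw [ha j]
    have hf : (0:ℝ) < (Nat.factorial j : ℝ) := by exact_mod_cast Nat.factorial_pos j
    have hd' : (1:ℝ) ≤ d := by exact_mod_cast hd
    have : (0:ℝ) < (d:ℝ) + j := by positivity
    positivity
  -- key termwise inequality
  have key : ∀ k, a m * b k ≤ a (m + k) := by
    intro k
    induction k with
    | zero =>
      simp [hb, risingFact]
    | succ k ih =>
      have hmk : m + (k+1) = (m+k) + 1 := by ring
      rw [hmk, aux_ratio τ d N (m+k) hd a ha]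
      have hs1 : (0:ℝ) < ((m+k:ℕ):ℝ)+1 := Nat.cast_add_one_pos _
      have hs2 : (0:ℝ) < (d:ℝ)+1+((m+k:ℕ):ℝ) := by positivity
      have hr : μ ≤ ((1+((m+k:ℕ):ℝ))/(2+((m+k:ℕ):ℝ)))^N *
          (((d:ℝ)+((m+k:ℕ):ℝ))/((d:ℝ)+1+((m+k:ℕ):ℝ)))^(m+k) * τ := by
        rw [hμ]
        have h1 := aux_mono m (m+k) N (Nat.le_add_right m k)
        have h2 := aux_exp d (m+k) hd
        have hp1 : (0:ℝ) ≤ ((1+(m:ℝ))/(2+m))^N := by positivity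
        have hp2 : (0:ℝ) ≤ (Real.exp 1)⁻¹ := by positivity
        have hp3 : (0:ℝ) ≤ ((1+((m+k:ℕ):ℝ))/(2+((m+k:ℕ):ℝ)))^N := by positivity
        have := mul_le_mul h1 h2 hp2 hp3
        nlinarith
      have hdivle : μ / ((((m+k:ℕ):ℝ))+1) / ((d:ℝ)+1+((m+k:ℕ):ℝ)) ≤
          (((1+((m+k:ℕ):ℝ))/(2+((m+k:ℕ):ℝ)))^N *
          (((d:ℝ)+((m+k:ℕ):ℝ))/((d:ℝ)+1+((m+k:ℕ):ℝ)))^(m+k) * τ) /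
          ((((m+k:ℕ):ℝ))+1) / ((d:ℝ)+1+((m+k:ℕ):ℝ)) := by
        gcongr
      calc a m * b (k+1)
          = (a m * b k) * (μ / ((((m+k:ℕ):ℝ))+1) / ((d:ℝ)+1+((m+k:ℕ):ℝ))) := by
            simp only [hb, risingFact_succ]
            have h1 := (hR1 k).ne'
            have h2 := (hR2 k).ne'
            have h3 : ((m:ℝ)+1+k) ≠ 0 := by positivity
            have h4 : ((d:ℝ)+1+(m:ℝ)+k) ≠ 0 := by positivity
            push_cast
            field_simp
            ring
        _ ≤ a (m+k) * ((((1+((m+k:ℕ):ℝ))/(2+((m+k:ℕ):ℝ)))^N *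
              (((d:ℝ)+((m+k:ℕ):ℝ))/((d:ℝ)+1+((m+k:ℕ):ℝ)))^(m+k) * τ) /
              ((((m+k:ℕ):ℝ))+1) / ((d:ℝ)+1+((m+k:ℕ):ℝ))) := by
            apply mul_le_mul ih hdivle _ (le_of_lt (hapos (m+k)))
            positivity
        _ = a (m+k) * ((((1+((m+k:ℕ):ℝ))/(2+((m+k:ℕ):ℝ)))^N *
              (((d:ℝ)+((m+k:ℕ):ℝ))/((d:ℝ)+1+((m+k:ℕ):ℝ)))^(m+k) * τ) /
              (((((m+k:ℕ):ℝ))+1) * ((d:ℝ)+1+((m+k:ℕ):ℝ)))) := by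
            rw [div_div]
  -- summability
  have hsum_a : Summable a := by
    apply Summable.of_nonneg_of_le (fun j => (hapos j).le) _
      (Real.summable_pow_div_factorial τ)
    intro j
    rw [ha j]
    have hf : (0:ℝ) < (Nat.factorial j : ℝ) := by exact_mod_cast Nat.factorial_pos j
    have hd' : (1:ℝ) ≤ d := by exact_mod_cast hd
    have h1 : (1:ℝ) ≤ (1 + (j:ℝ))^N := one_le_pow₀ (by linarith [Nat.cast_nonneg (α := ℝ) j])
    have h2 : (1:ℝ) ≤ ((d:ℝ) + j)^j := one_le_pow₀ (by linarith [Nat.cast_nonneg (α := ℝ) j])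
    apply div_le_div_of_nonneg_left (by positivity) hf
    nlinarith [mul_le_mul h1 h2 zero_le_one (le_trans zero_le_one h1)]
  have hsum_am : Summable (fun k => a (m + k)) := by
    exact hsum_a.comp_injective (add_right_injective m)
  have hsum_amb : Summable (fun k => a m * b k) :=
    Summable.of_nonneg_of_le (fun k => mul_nonneg (hapos m).le (hbpos k).le) key hsum_am
  calc a m * ∑' k, b k = ∑' k, a m * b k := (tsum_mul_left).symm
    _ ≤ ∑' k, a (m + k) := Summable.tsum_le_tsum key hsum_amb hsum_am
end
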